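/- arXiv:0906.0650 — 3 statements merged into one kernel-verified Lean document; each statement's English description precedes it below -/
import Mathlib

section
/- For every rack R, every commutative ring A, and every n ≥ 2, the composite ∂_{n−1} ∘ ∂_n : C^R_n(R;A) → C^R_{n−2}(R;A) is the zero map; hence (C^R_*(R;A), ∂_*) is a chain complex. -/
/-- A rack in the convention of the paper: two binary operations `◁` (`tri`) and
`◀` (`triInv`) that are mutually inverse on the right and right self-distributive. -/
class PaperRack (α : Type*) where
  tri : α → α → α
  triInv : α → α → α
  triInv_tri : ∀ a b, triInv (tri a b) b = a
  tri_triInv : ∀ a b, tri (triInv a b) b = a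
  tri_tri : ∀ a b c, tri (tri a b) c = tri (tri a c) (tri b c)

/-- A quandle: a rack whose operations are idempotent. -/
class PaperQuandle (α : Type*) extends PaperRack α where
  tri_self : ∀ a, tri a a = a
  triInv_self : ∀ a, triInv a a = a

open PaperRack

/-- The rack chain module `C^R_n(R; A)`: the free `A`-module on `n`-tuples of
elements of `R` (for `n = 0` this is free on the unique empty tuple, i.e. `A`). -/
abbrev RackChains (R A : Type*) [CommRing A] (n : ℕ) : Type _ := (Fin n → R) →₀ A

/-- The `i`-th "acted" face of a tuple: delete the `i`-th entry and act by it on all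
earlier entries: `(x₁ ◁ x_i, …, x_{i−1} ◁ x_i, x_{i+1}, …, xₙ)`. -/
def dTop {R : Type*} [PaperRack R] {m : ℕ} (i : Fin (m + 1)) (x : Fin (m + 1) → R) :
    Fin m → R :=
  fun j => if ((i.succAbove j : Fin (m + 1)) : ℕ) < (i : ℕ)
    then tri (x (i.succAbove j)) (x i) else x (i.succAbove j)

/-- The `i`-th "deleted" face of a tuple: `(x₁, …, x_{i−1}, x_{i+1}, …, xₙ)`. -/
def dBot {R : Type*} {m : ℕ} (i : Fin (m + 1)) (x : Fin (m + 1) → R) : Fin m → R :=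
  fun j => x (i.succAbove j)

/-- The boundary map `∂_{m+1} : C^R_{m+1}(R;A) → C^R_m(R;A)`; for `m + 1 ≥ 2` it is
`∂_n(x₁,…,xₙ) = Σ_{i=1}^{n} (−1)^{n−i} [(x₁◁x_i,…,x_{i−1}◁x_i,x_{i+1},…,xₙ)
− (x₁,…,x_{i−1},x_{i+1},…,xₙ)]`, and `∂₁(x) = 1`. -/
noncomputable def rackBoundary (R A : Type*) [PaperRack R] [CommRing A] :
    (m : ℕ) → RackChains R A (m + 1) →ₗ[A] RackChains R A m
  | 0 => Finsupp.lsum A fun _ =>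
      LinearMap.toSpanSingleton A _ (Finsupp.single (fun i : Fin 0 => i.elim0) (1 : A))
  | (m + 1) => Finsupp.lsum A fun x => LinearMap.toSpanSingleton A _
      (∑ i : Fin (m + 2), ((-1 : A) ^ (m + 1 - (i : ℕ))) •
        (Finsupp.single (dTop i x) (1 : A) - Finsupp.single (dBot i x) (1 : A)))

/-- The degenerate chains `C^D_n(Q;A)`: the span of the `n`-tuples having two equal
adjacent entries. -/
noncomputable def Degen (R A : Type*) [CommRing A] (n : ℕ) : Submodule A (RackChains R A n) :=
  Submodule.span A
    { c | ∃ x : Fin n → R,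
        (∃ i : ℕ, ∃ h : i + 1 < n, x ⟨i, by omega⟩ = x ⟨i + 1, h⟩) ∧
        c = Finsupp.single x (1 : A) }

/-!
Expanding `∂ ∂ x` gives a double sum over pairs `(i, j)` of `± (d⁺_j - d⁻_j) (d⁺_i - d⁻_i) x`,
where `d⁺ = dTop` and `d⁻ = dBot`. For `j < i` the faces satisfy
`d^ε_{i-1} d^δ_j = d^δ_j d^ε_i` (for `ε = δ = +` this is right self-distributivity), so the terms
at `(i, j)` and `(j, i - 1)` involve the same four tuples with opposite signs. The fixed-point-free
involution `(i, j) ↦ (j, i - 1)` for `j < i`, `(i, j) ↦ (j + 1, i)` otherwise, cancels the sum in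
pairs. In the lowest degree `∂₁` sends every generator to `1`, which kills each `d⁺_i - d⁻_i`.
-/

theorem Fin.sum_sum_eq_zero_of_add_eq_zero {M : Type*} [AddCommMonoid M] {n : ℕ}
    (f : Fin (n + 2) → Fin (n + 1) → M)
    (hf : ∀ i j (h : j.castSucc < i), f i j + f j.castSucc (i.pred (Fin.ne_zero_of_lt h)) = 0) :
    ∑ i, ∑ j, f i j = 0 := by
  rw [← Fintype.sum_prod_type']
  refine Finset.sum_ninvolution (fun p => if h : p.2.castSucc < p.1
      then (p.2.castSucc, p.1.pred (Fin.ne_zero_of_lt h))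
      else (p.2.succ, p.1.castPred (Fin.ne_last_of_lt (Fin.le_castSucc_iff.1 (not_lt.1 h)))))
    ?_ ?_ (fun _ => Finset.mem_univ _) ?_
  · rintro ⟨i, j⟩
    dsimp only
    split_ifs with h
    · exact hf i j h
    · have hi : i < j.succ := Fin.le_castSucc_iff.1 (not_lt.1 h)
      have := hf j.succ (i.castPred (Fin.ne_last_of_lt hi)) (by rwa [Fin.castSucc_castPred])
      rw [add_comm]
      rwa [Fin.pred_succ, Fin.castSucc_castPred] at this
  · rintro ⟨i, j⟩ -
    dsimp only
    split_ifs with h <;> simp only [ne_eq, Prod.mk.injEq, not_and] <;> grind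
  · rintro ⟨i, j⟩
    dsimp only
    by_cases h : j.castSucc < i
    · rw [dif_pos h, dif_neg (by
        simp only [not_lt, Fin.lt_def, Fin.val_castSucc, Fin.val_pred] at h ⊢; omega)]
      simp
    · rw [dif_neg h, dif_pos (by simpa [Fin.le_castSucc_iff] using h)]
      simp

section Faces

variable {R : Type*} {n : ℕ} {i : Fin (n + 2)} {j : Fin (n + 1)}

theorem dBot_apply {m : ℕ} (i : Fin (m + 1)) (x : Fin (m + 1) → R) (t : Fin m) :
    dBot i x t = if t.castSucc < i then x t.castSucc else x t.succ :=
  apply_ite x _ _ _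

theorem dBot_dBot_of_castSucc_lt (h : j.castSucc < i) (x : Fin (n + 2) → R) :
    dBot (i.pred (Fin.ne_zero_of_lt h)) (dBot j.castSucc x) = dBot j (dBot i x) := by
  funext t
  simp only [dBot_apply]
  grind

variable [PaperRack R]

theorem dTop_apply {m : ℕ} (i : Fin (m + 1)) (x : Fin (m + 1) → R) (t : Fin m) :
    dTop i x t = if t.castSucc < i then tri (x t.castSucc) (x i) else x t.succ := by
  simp only [dTop, ← Fin.lt_def, Fin.succAbove_lt_iff_castSucc_lt]
  split_ifs with h
  · rw [Fin.succAbove_of_castSucc_lt _ _ h]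
  · rw [Fin.succAbove_of_le_castSucc _ _ (not_lt.1 h)]

theorem dTop_dTop_of_castSucc_lt (h : j.castSucc < i) (x : Fin (n + 2) → R) :
    dTop (i.pred (Fin.ne_zero_of_lt h)) (dTop j.castSucc x) = dTop j (dTop i x) := by
  funext t
  simp only [dTop_apply]
  grind [tri_tri]

theorem dBot_dTop_of_castSucc_lt (h : j.castSucc < i) (x : Fin (n + 2) → R) :
    dBot (i.pred (Fin.ne_zero_of_lt h)) (dTop j.castSucc x) = dTop j (dBot i x) := by
  funext t
  simp only [dTop_apply, dBot_apply]
  grind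

theorem dTop_dBot_of_castSucc_lt (h : j.castSucc < i) (x : Fin (n + 2) → R) :
    dTop (i.pred (Fin.ne_zero_of_lt h)) (dBot j.castSucc x) = dBot j (dTop i x) := by
  funext t
  simp only [dTop_apply, dBot_apply]
  grind

end Faces

section Boundary

variable {R : Type*} [PaperRack R] (A : Type*) [CommRing A]

theorem rackBoundary_zero_single (x : Fin 1 → R) (a : A) :
    rackBoundary R A 0 (Finsupp.single x a) = Finsupp.single Fin.elim0 a := by
  simp [rackBoundary]

theorem rackBoundary_succ_single {m : ℕ} (x : Fin (m + 2) → R) :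
    rackBoundary R A (m + 1) (Finsupp.single x 1) =
      ∑ i : Fin (m + 2), (-1 : A) ^ (m + 1 - (i : ℕ)) •
        (Finsupp.single (dTop i x) 1 - Finsupp.single (dBot i x) 1) := by
  simp [rackBoundary]

noncomputable def boundaryBoundaryTerm {n : ℕ} (x : Fin (n + 2) → R) (i : Fin (n + 2))
    (j : Fin (n + 1)) : RackChains R A n :=
  ((-1 : A) ^ (n + 1 - (i : ℕ)) * (-1) ^ (n - (j : ℕ))) •
    ((Finsupp.single (dTop j (dTop i x)) 1 - Finsupp.single (dBot j (dTop i x)) 1) -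
      (Finsupp.single (dTop j (dBot i x)) 1 - Finsupp.single (dBot j (dBot i x)) 1))

theorem rackBoundary_succ_rackBoundary_succ_single {k : ℕ} (x : Fin (k + 3) → R) :
    rackBoundary R A (k + 1) (rackBoundary R A (k + 2) (Finsupp.single x 1)) =
      ∑ i, ∑ j, boundaryBoundaryTerm A x i j := by
  simp only [rackBoundary_succ_single, map_sum, map_smul, map_sub, boundaryBoundaryTerm,
    Finset.smul_sum, ← Finset.sum_sub_distrib, mul_smul, smul_sub]

theorem boundaryBoundaryTerm_add_boundaryBoundaryTerm_pred {n : ℕ} (x : Fin (n + 2) → R)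
    {i : Fin (n + 2)} {j : Fin (n + 1)} (h : j.castSucc < i) :
    boundaryBoundaryTerm A x i j +
      boundaryBoundaryTerm A x j.castSucc (i.pred (Fin.ne_zero_of_lt h)) = 0 := by
  have hsign : (-1 : A) ^ (n + 1 - (j.castSucc : ℕ)) *
      (-1) ^ (n - (i.pred (Fin.ne_zero_of_lt h) : ℕ)) =
        -((-1) ^ (n + 1 - (i : ℕ)) * (-1) ^ (n - (j : ℕ))) := by
    have hexp : n + 1 - (j.castSucc : ℕ) + (n - (i.pred (Fin.ne_zero_of_lt h) : ℕ)) =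
        n + 1 - (i : ℕ) + (n - (j : ℕ)) + 1 := by
      rw [Fin.lt_def, Fin.val_castSucc] at h
      rw [Fin.val_castSucc, Fin.val_pred]
      omega
    rw [← pow_add, ← pow_add, hexp, pow_succ, mul_neg_one]
  rw [boundaryBoundaryTerm, boundaryBoundaryTerm, hsign, dTop_dTop_of_castSucc_lt h,
    dBot_dTop_of_castSucc_lt h, dTop_dBot_of_castSucc_lt h, dBot_dBot_of_castSucc_lt h, neg_smul,
    sub_sub_sub_comm, add_neg_cancel]

end Boundary

/-- For every rack `R`, commutative ring `A` and `n ≥ 2` (here `n = m + 2`), the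
composite `∂_{n−1} ∘ ∂_n : C^R_n(R;A) → C^R_{n−2}(R;A)` is zero; hence the rack chain
modules form a chain complex. -/
theorem rackBoundary_comp_rackBoundary (R A : Type*) [PaperRack R] [CommRing A] (m : ℕ) :
    (rackBoundary R A m).comp (rackBoundary R A (m + 1)) = 0 := by
  refine Finsupp.basisSingleOne.ext fun x => ?_
  rw [Finsupp.coe_basisSingleOne, LinearMap.comp_apply, LinearMap.zero_apply]
  cases m with
  | zero => simp [rackBoundary_succ_single, rackBoundary_zero_single]
  | succ k =>
    rw [rackBoundary_succ_rackBoundary_succ_single]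
    exact Fin.sum_sum_eq_zero_of_add_eq_zero _
      fun _ _ h => boundaryBoundaryTerm_add_boundaryBoundaryTerm_pred A x h
end

section
/- Let Q be a quandle and A a commutative ring. For every n ≥ 2, the boundary map satisfies ∂_n(C^D_n(Q;A)) ⊆ C^D_{n−1}(Q;A) (where C^D_1(Q;A) = 0); hence the degenerate chains form a subcomplex of the rack chain complex and the quotient modules C^Q_n(Q;A) inherit well-defined boundary maps. -/
open PaperRack

/-!
If `x` has equal adjacent entries `x_k = x_{k+1}`, the terms `i = k` and `i = k + 1` of
`∂(x)` carry opposite signs and equal faces (for the acted faces because `x_k ◁ x_k = x_k`),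
so they cancel; every other face still has the two equal entries side by side.
-/

def faceBy {R : Type*} {m : ℕ} (g : R → R) (i : Fin (m + 1)) (x : Fin (m + 1) → R) :
    Fin m → R :=
  fun j => if ((i.succAbove j : Fin (m + 1)) : ℕ) < (i : ℕ)
    then g (x (i.succAbove j)) else x (i.succAbove j)

def IsDegenerate {R : Type*} {n : ℕ} (x : Fin n → R) : Prop :=
  ∃ k : ℕ, ∃ h : k + 1 < n, x ⟨k, by omega⟩ = x ⟨k + 1, h⟩

section Faces

variable {R : Type*} {m : ℕ}

theorem dTop_eq_faceBy [PaperRack R] (i : Fin (m + 1)) (x : Fin (m + 1) → R) :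
    dTop i x = faceBy (tri · (x i)) i x :=
  rfl

theorem dBot_eq_faceBy (i : Fin (m + 1)) (x : Fin (m + 1) → R) :
    dBot i x = faceBy id i x :=
  funext fun _ => (ite_self _).symm

theorem faceBy_apply_of_lt (g : R → R) {i : Fin (m + 1)} (x : Fin (m + 1) → R) {j : Fin m}
    (h : (j : ℕ) < i) : faceBy g i x j = g (x ⟨j, by omega⟩) := by
  have hj : i.succAbove j = ⟨j, by omega⟩ := Fin.succAbove_of_castSucc_lt _ _ h
  simp only [faceBy, hj, if_pos h]

theorem faceBy_apply_of_le (g : R → R) {i : Fin (m + 1)} (x : Fin (m + 1) → R) {j : Fin m}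
    (h : (i : ℕ) ≤ j) : faceBy g i x j = x ⟨j + 1, by omega⟩ := by
  have hj : i.succAbove j = ⟨j + 1, by omega⟩ := Fin.succAbove_of_le_castSucc _ _ h
  simp only [faceBy, hj, Fin.val_mk, if_neg (show ¬(j : ℕ) + 1 < i by omega)]

theorem faceBy_eq_faceBy_succ (g : R → R) (x : Fin (m + 1) → R) {k : ℕ} (hk : k + 1 < m + 1)
    (h : g (x ⟨k, by omega⟩) = x ⟨k + 1, hk⟩) :
    faceBy g ⟨k, by omega⟩ x = faceBy g ⟨k + 1, hk⟩ x := by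
  funext j
  rcases lt_trichotomy (j : ℕ) k with hj | rfl | hj
  · rw [faceBy_apply_of_lt g x hj, faceBy_apply_of_lt g x (by simp; omega)]
  · rw [faceBy_apply_of_le g x le_rfl, faceBy_apply_of_lt g x (by simp), h]
  · rw [faceBy_apply_of_le g x hj.le, faceBy_apply_of_le g x (by simp; omega)]

/-- Deleting an entry other than the two equal adjacent ones keeps them adjacent, and
`faceBy` treats them alike since they lie on the same side of the deleted entry. -/
theorem isDegenerate_faceBy (g : R → R) {x : Fin (m + 1) → R} {k : ℕ} (hk : k + 1 < m + 1)
    (hx : x ⟨k, by omega⟩ = x ⟨k + 1, hk⟩) {i : Fin (m + 1)} (hik : (i : ℕ) ≠ k)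
    (hik₁ : (i : ℕ) ≠ k + 1) : IsDegenerate (faceBy g i x) := by
  rcases lt_or_gt_of_ne hik with hi | hi
  · obtain ⟨l, rfl⟩ : ∃ l, k = l + 1 := ⟨k - 1, by omega⟩
    refine ⟨l, by omega, ?_⟩
    rw [faceBy_apply_of_le g x (by simp; omega), faceBy_apply_of_le g x (by simp; omega)]
    exact hx
  · refine ⟨k, by omega, ?_⟩
    rw [faceBy_apply_of_lt g x (by simp; omega), faceBy_apply_of_lt g x (by simp; omega), hx]

theorem dBot_eq_dBot_succ (x : Fin (m + 1) → R) {k : ℕ} (hk : k + 1 < m + 1)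
    (hx : x ⟨k, by omega⟩ = x ⟨k + 1, hk⟩) : dBot ⟨k, by omega⟩ x = dBot ⟨k + 1, hk⟩ x := by
  rw [dBot_eq_faceBy, dBot_eq_faceBy]
  exact faceBy_eq_faceBy_succ id x hk hx

theorem dTop_eq_dTop_succ [PaperQuandle R] (x : Fin (m + 1) → R) {k : ℕ} (hk : k + 1 < m + 1)
    (hx : x ⟨k, by omega⟩ = x ⟨k + 1, hk⟩) : dTop ⟨k, by omega⟩ x = dTop ⟨k + 1, hk⟩ x := by
  rw [dTop_eq_faceBy, dTop_eq_faceBy, ← hx]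
  exact faceBy_eq_faceBy_succ _ x hk ((PaperQuandle.tri_self _).trans hx)

end Faces

section Chains

variable {R A : Type*} [CommRing A]

theorem single_mem_degen {n : ℕ} {x : Fin n → R} (hx : IsDegenerate x) :
    Finsupp.single x (1 : A) ∈ Degen R A n :=
  Submodule.subset_span ⟨x, hx, rfl⟩

theorem map_degen_le_iff {n : ℕ} {M : Type*} [AddCommGroup M] [Module A M]
    (f : RackChains R A n →ₗ[A] M) (p : Submodule A M) :
    (Degen R A n).map f ≤ p ↔ ∀ x : Fin n → R, IsDegenerate x → f (Finsupp.single x 1) ∈ p := by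
  simp only [Degen, Submodule.map_span_le]
  exact ⟨fun h x hx => h _ ⟨x, hx, rfl⟩, by rintro h _ ⟨x, hx, rfl⟩; exact h x hx⟩

theorem degen_eq_bot_of_le_one {n : ℕ} (hn : n ≤ 1) : Degen R A n = ⊥ := by
  rw [eq_bot_iff, Degen, Submodule.span_le]
  rintro _ ⟨x, ⟨k, hk, -⟩, rfl⟩
  omega

theorem rackBoundary_single [PaperRack R] {m : ℕ} (x : Fin (m + 2) → R) :
    rackBoundary R A (m + 1) (Finsupp.single x 1) = ∑ i : Fin (m + 2),
      ((-1 : A) ^ (m + 1 - (i : ℕ))) •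
        (Finsupp.single (dTop i x) (1 : A) - Finsupp.single (dBot i x) (1 : A)) := by
  simp [rackBoundary, LinearMap.toSpanSingleton_apply]

theorem alternating_sum_mem {M : Type*} [AddCommGroup M] [Module A M] {p : Submodule A M}
    {m : ℕ} (t : Fin (m + 2) → M) {k : ℕ} (hk : k + 1 < m + 2)
    (heq : t ⟨k, by omega⟩ = t ⟨k + 1, hk⟩)
    (hmem : ∀ i : Fin (m + 2), (i : ℕ) ≠ k → (i : ℕ) ≠ k + 1 → t i ∈ p) :
    ∑ i : Fin (m + 2), ((-1 : A) ^ (m + 1 - (i : ℕ))) • t i ∈ p := by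
  set pair : Finset (Fin (m + 2)) := {⟨k, by omega⟩, ⟨k + 1, hk⟩}
  have hsign : (-1 : A) ^ (m + 1 - k) = -(-1 : A) ^ (m + 1 - (k + 1)) := by
    rw [show m + 1 - k = m + 1 - (k + 1) + 1 by omega, pow_succ, mul_neg_one]
  have hpair : ∑ i ∈ pair, ((-1 : A) ^ (m + 1 - (i : ℕ))) • t i = 0 := by
    rw [Finset.sum_pair (by simp [Fin.ext_iff]), heq]
    simp only [hsign, neg_smul, neg_add_cancel]
  rw [← Finset.sum_sdiff (Finset.subset_univ pair), hpair, add_zero]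
  refine Submodule.sum_mem _ fun i hi => Submodule.smul_mem _ _ (hmem i ?_ ?_)
  all_goals
    intro h
    simp [pair, Fin.ext_iff, h] at hi

end Chains

/-- For a quandle `Q`, `C^D_1(Q;A) = 0`, and for every `n ≥ 2` (here `n = m + 2`) the
boundary map sends degenerate chains to degenerate chains:
`∂_n(C^D_n(Q;A)) ⊆ C^D_{n−1}(Q;A)`. Hence the degenerate chains form a subcomplex and
the quotients `C^Q_n(Q;A)` inherit well-defined boundary maps. -/
theorem degen_subcomplex (Q A : Type*) [PaperQuandle Q] [CommRing A] :
    Degen Q A 1 = ⊥ ∧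
      ∀ m : ℕ, (Degen Q A (m + 2)).map (rackBoundary Q A (m + 1)) ≤ Degen Q A (m + 1) := by
  refine ⟨degen_eq_bot_of_le_one le_rfl, fun m => ?_⟩
  rw [map_degen_le_iff]
  rintro x ⟨k, hk, hx⟩
  rw [rackBoundary_single]
  refine alternating_sum_mem _ hk ?_ fun i hik hik₁ => Submodule.sub_mem _ ?_ ?_
  · rw [dTop_eq_dTop_succ x hk hx, dBot_eq_dBot_succ x hk hx]
  · rw [dTop_eq_faceBy]
    exact single_mem_degen (isDegenerate_faceBy _ hk hx hik hik₁)
  · rw [dBot_eq_faceBy]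
    exact single_mem_degen (isDegenerate_faceBy _ hk hx hik hik₁)
end

section
/- Let Q be a rack, A an abelian group, and φ : Q × Q → A a rack 2-cocycle. Fix β ∈ Q, and define φ̃_β : Q × Q × Q → A by φ̃_β(α, a, b) = φ(a, b) if α and β are connected, and φ̃_β(α, a, b) = 0 otherwise. Then φ̃_β is a rack 3-cocycle. -/
open PaperRack

/-- `a ◁^{ε} x` : `a ◁ x` if `ε = +1` (encoded `true`) and `a ◀ x` if `ε = −1`
(encoded `false`). -/
def PaperRack.triE {α : Type*} [PaperRack α] (a x : α) (ε : Bool) : α :=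
  if ε then tri a x else triInv a x

/-- Iterated application `(⋯(a ◁^{ε₁} x₁)⋯) ◁^{εₙ} xₙ`. -/
def PaperRack.foldTri {α : Type*} [PaperRack α] (a : α) (l : List (α × Bool)) : α :=
  l.foldl (fun b p => triE b p.1 p.2) a

open PaperRack

/-- Two elements of a rack are connected if one is obtained from the other by a finite
sequence of (signed) rack operations. -/
def IsConnectedTo {α : Type*} [PaperRack α] (a b : α) : Prop :=
  ∃ (n : ℕ) (x : Fin n → α) (ε : Fin n → Bool),
    foldTri a (List.ofFn fun i => (x i, ε i)) = b

/-- A rack 2-cocycle with values in an abelian group `A`. -/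
def IsRack2Cocycle {α A : Type*} [PaperRack α] [AddCommGroup A] (φ : α → α → A) : Prop :=
  ∀ x y z, φ x y + φ (tri x y) z = φ x z + φ (tri x z) (tri y z)

/-- A rack 3-cocycle with values in an abelian group `A`. -/
def IsRack3Cocycle {α A : Type*} [PaperRack α] [AddCommGroup A] (ψ : α → α → α → A) : Prop :=
  ∀ α' x y z,
    ψ α' y z + ψ (tri α' y) (tri x y) z + ψ α' x y
      = ψ (tri α' x) y z + ψ α' x z + ψ (tri α' z) (tri x z) (tri y z)

lemma isConnectedTo_iff_exists_foldTri {α : Type*} [PaperRack α] (a b : α) :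
    IsConnectedTo a b ↔ ∃ l : List (α × Bool), foldTri a l = b := by
  constructor
  · rintro ⟨n, x, ε, h⟩
    exact ⟨_, h⟩
  · rintro ⟨l, h⟩
    refine ⟨l.length, fun i => (l.get i).1, fun i => (l.get i).2, ?_⟩
    simpa using h

lemma isConnectedTo_tri_left {α : Type*} [PaperRack α] (a x b : α) :
    IsConnectedTo (tri a x) b ↔ IsConnectedTo a b := by
  simp only [isConnectedTo_iff_exists_foldTri]
  constructor
  · rintro ⟨l, h⟩
    exact ⟨(x, true) :: l, h⟩
  · rintro ⟨l, h⟩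
    refine ⟨(x, false) :: l, ?_⟩
    simpa [foldTri, triE, triInv_tri] using h

lemma isRack3Cocycle_ite {α A : Type*} [PaperRack α] [AddCommGroup A]
    {φ : α → α → A} (hφ : IsRack2Cocycle φ) (P : α → Prop) [DecidablePred P]
    (hP : ∀ a x, P (tri a x) ↔ P a) :
    IsRack3Cocycle (fun α' a b => if P α' then φ a b else 0) := by
  intro α' x y z
  simp only [hP]
  split_ifs
  · linear_combination (norm := abel) hφ x y z
  · simp

open scoped Classical in
/-- Given a rack 2-cocycle `φ` and a fixed element `β`, the map
`φ̃_β(α, a, b) = φ(a, b)` if `α` is connected to `β` and `0` otherwise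
is a rack 3-cocycle. -/
theorem isRack3Cocycle_extend {α A : Type*} [PaperRack α] [AddCommGroup A]
    (φ : α → α → A) (hφ : IsRack2Cocycle φ) (β : α) :
    IsRack3Cocycle (fun α' a b => if IsConnectedTo α' β then φ a b else 0) :=
  isRack3Cocycle_ite hφ (IsConnectedTo · β) fun a x => isConnectedTo_tri_left a x β
end
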